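/- arXiv:1811.02860 — 3 statements merged into one kernel-verified Lean document; each statement's English description precedes it below -/
import Mathlib

section
/- Let K be a henselian discrete valuation field with residue field of characteristic p>0, Λ a finite field of characteristic ℓ ≠ p, and M, N finitely generated Λ-modules with continuous actions of the absolute Galois group G_K. (i) If M and N are isoclinic of slopes r and r' respectively with r ≥ r', then the largest slope of M ⊗_Λ N is at most r and dimtot_K(M ⊗_Λ N) ≤ dim_Λ(N)·dim_Λ(M)·r; if moreover r > r', then M ⊗_Λ N is isoclinic of slope r and dimtot_K(M ⊗_Λ N) = dim_Λ(N)·dimtot_K(M) = dim_Λ(N)·dim_Λ(M)·r. (ii) If M and N are logarithmic isoclinic of logarithmic slopes r_log and r_log' respectively with r_log ≥ r_log', then the largest logarithmic slope of M ⊗_Λ N is at most r_log and sw_K(M ⊗_Λ N) ≤ dim_Λ(N)·dim_Λ(M)·r_log; if moreover r_log > r_log', then M ⊗_Λ N is logarithmic isoclinic of logarithmic slope r_log and sw_K(M ⊗_Λ N) = dim_Λ(N)·sw_K(M) = dim_Λ(N)·dim_Λ(M)·r_log. -/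
/-!
STATEMENT 12 (Lemma 1.7 `tensordtsw`): Let `K` be a henselian discrete valuation
field with residue field of characteristic `p > 0`, `Λ` a finite field of
characteristic `ℓ ≠ p`, and `M`, `N` finitely generated `Λ`-modules with continuous
actions of the absolute Galois group `G_K`.

(i) If `M` and `N` are isoclinic of slopes `r` and `r'` with `r ≥ r'`, then the
largest slope of `M ⊗_Λ N` is at most `r` and
`dimtot_K(M ⊗ N) ≤ dim N · dim M · r`; if moreover `r > r'` then `M ⊗ N` is isoclinic
of slope `r` and `dimtot_K(M ⊗ N) = dim N · dimtot_K(M) = dim N · dim M · r`.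

(ii) The same statements for the logarithmic filtration, logarithmic slopes and the
Swan conductor `sw_K`.

Modelling: the absolute Galois group `G_K` is an abstract group `G` carrying the
Abbes–Saito ramification filtration `fil` (slopes start at the threshold `1`) and
the logarithmic ramification filtration `logfil` (logarithmic slopes start at the
threshold `0`).  Isoclinicity, slope decompositions, the total dimension `dimtot`
and the Swan conductor (namely `dimtotOf` of a (log-)slope decomposition) are
defined below exactly as in Abbes–Saito ramification theory.
"The largest slope of `M ⊗ N` is at most `r`" is expressed by the vanishing of the
coinvariants condition: `fil s` acts trivially on `M ⊗ N` for every `s > r`.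
-/

open scoped TensorProduct

section Slopes

variable {Λ : Type*} [Field Λ] {G : Type*} [Group G]
variable {M : Type*} [AddCommGroup M] [Module Λ M]

/-- The submodule of invariants of the representation `ρ` under a subgroup `H`. -/
def subInvariants (ρ : Representation Λ G M) (H : Subgroup G) : Submodule Λ M where
  carrier := {v | ∀ g ∈ H, ρ g v = v}
  add_mem' := by
    intro a b ha hb g hg
    simp only [Set.mem_setOf_eq] at *
    rw [map_add, ha g hg, hb g hg]
  zero_mem' := by
    intro g hg
    simp
  smul_mem' := by
    intro c a ha g hg
    simp only [Set.mem_setOf_eq] at *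
    rw [map_smul, ha g hg]

/-- `ρ` is isoclinic of slope `r` with respect to the ramification filtration `fil`,
where slopes are measured starting from the threshold `t` (`t = 1` for the
Abbes–Saito filtration, `t = 0` for the logarithmic one): the invariants under
`fil r` vanish (when `r > t`), while `fil s` acts trivially for every `s > r`. -/
def IsIsoclinic (fil : ℚ → Subgroup G) (t : ℚ) (ρ : Representation Λ G M) (r : ℚ) : Prop :=
  t ≤ r ∧ (t < r → subInvariants ρ (fil r) = ⊥) ∧
    ∀ s : ℚ, r < s → subInvariants ρ (fil s) = ⊤

/-- `W` is the (Abbes–Saito) slope decomposition of the representation `ρ` with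
respect to the filtration `fil` with threshold `t`: an internal direct sum
decomposition into stable submodules, with finitely many nonzero pieces, the piece
`W r` being isoclinic of slope `r`. -/
def IsSlopeDecomp (fil : ℚ → Subgroup G) (t : ℚ) (ρ : Representation Λ G M)
    (W : ℚ → Submodule Λ M) : Prop :=
  (∀ (r : ℚ) (g : G), ∀ v ∈ W r, ρ g v ∈ W r) ∧
  {r : ℚ | W r ≠ ⊥}.Finite ∧
  DirectSum.IsInternal W ∧
  ∀ r : ℚ, W r ≠ ⊥ →
    t ≤ r ∧ (t < r → ∀ v ∈ W r, (∀ g ∈ fil r, ρ g v = v) → v = 0) ∧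
      ∀ s : ℚ, r < s → ∀ g ∈ fil s, ∀ v ∈ W r, ρ g v = v

/-- The total dimension (for the Abbes–Saito filtration), resp. the Swan conductor
(for the logarithmic filtration), attached to a slope decomposition `W`:
`∑ r, r · dim W r`. -/
noncomputable def dimtotOf (W : ℚ → Submodule Λ M) : ℚ :=
  ∑ᶠ r : ℚ, r * (Module.finrank Λ (W r) : ℚ)

end Slopes

/-!
If `fil s` acts trivially on `N` and `M`, it acts trivially on `M ⊗ N`, which bounds the
slopes of `M ⊗ N` by `r`. If `r' < r`, then `fil r` acts trivially on `N`, so as a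
`fil r`-representation `M ⊗ N` is a direct sum of `dim N` copies of `M` (choose a basis of
`N`) and has no nonzero invariants; hence `M ⊗ N` is isoclinic of slope `r`. A slope
decomposition with all slopes `≤ r` has total dimension `≤ r · dim`, with equality when it
is concentrated in slope `r`, as it is for an isoclinic representation of slope `r > t`.
-/

open Module

section Invariants

variable {Λ G M N : Type*} [Field Λ] [Group G]
  [AddCommGroup M] [Module Λ M] [AddCommGroup N] [Module Λ N]
  {ρ : Representation Λ G M} {ρM : Representation Λ G M} {ρN : Representation Λ G N}
  {H : Subgroup G}

theorem mem_subInvariants {v : M} : v ∈ subInvariants ρ H ↔ ∀ g ∈ H, ρ g v = v :=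
  Iff.rfl

theorem subInvariants_eq_top_iff : subInvariants ρ H = ⊤ ↔ ∀ g ∈ H, ρ g = 1 := by
  simp only [Submodule.eq_top_iff', mem_subInvariants, LinearMap.ext_iff, End.one_apply]
  exact ⟨fun h g hg v => h v g hg, fun h v g hg => h g hg v⟩

theorem subInvariants_tprod_eq_top (hM : subInvariants ρM H = ⊤)
    (hN : subInvariants ρN H = ⊤) : subInvariants (ρM.tprod ρN) H = ⊤ := by
  rw [subInvariants_eq_top_iff] at *
  intro g hg
  rw [Representation.tprod_apply, hM g hg, hN g hg, TensorProduct.map_one]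

theorem equivFinsuppOfBasisRight_tprod_apply {ι : Type*} [DecidableEq ι] (b : Basis ι Λ N)
    {g : G} (hg : ρN g = 1) (x : M ⊗[Λ] N) (i : ι) :
    TensorProduct.equivFinsuppOfBasisRight b ((ρM.tprod ρN) g x) i =
      ρM g (TensorProduct.equivFinsuppOfBasisRight b x i) := by
  induction x using TensorProduct.induction_on with
  | zero => simp
  | tmul m n => simp [Representation.tprod_apply, hg]
  | add x y hx hy => simp only [map_add, Finsupp.add_apply, hx, hy]

theorem subInvariants_tprod_eq_bot (hM : subInvariants ρM H = ⊥)
    (hN : subInvariants ρN H = ⊤) : subInvariants (ρM.tprod ρN) H = ⊥ := by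
  classical
  let e := TensorProduct.equivFinsuppOfBasisRight (M := M) (Free.chooseBasis Λ N)
  rw [subInvariants_eq_top_iff] at hN
  rw [eq_bot_iff]
  intro x hx
  have hcoeff : ∀ i, e x i ∈ subInvariants ρM H := fun i g hg => by
    rw [← equivFinsuppOfBasisRight_tprod_apply _ (hN g hg), hx g hg]
  have hex : e x = 0 := Finsupp.ext fun i => by simpa [hM] using hcoeff i
  simpa using hex

end Invariants

section SlopeDecomposition

variable {Λ G M : Type*} [Field Λ] [Group G] [AddCommGroup M] [Module Λ M]
  {fil : ℚ → Subgroup G} {t r : ℚ} {ρ : Representation Λ G M} {W : ℚ → Submodule Λ M}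

theorem finrank_finset_sup_eq_sum [FiniteDimensional Λ M] (hW : iSupIndep W) (S : Finset ℚ) :
    finrank Λ ↥(S.sup W) = ∑ s ∈ S, finrank Λ (W s) := by
  classical
  induction S using Finset.induction_on with
  | empty => simp
  | insert a S ha ih =>
    have hdisj : Disjoint (W a) (S.sup W) :=
      (hW a).mono_right <| Finset.sup_le fun b hb =>
        le_iSup₂_of_le b (ne_of_mem_of_not_mem hb ha) le_rfl
    have hdim := Submodule.finrank_sup_add_finrank_inf_eq (W a) (S.sup W)
    rw [hdisj.eq_bot, finrank_bot] at hdim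
    rw [Finset.sum_insert ha, Finset.sup_insert, ← ih]
    omega

namespace IsSlopeDecomp

theorem eq_bot_of_lt (hW : IsSlopeDecomp fil t ρ W) (htr : t ≤ r)
    (htop : ∀ s, r < s → subInvariants ρ (fil s) = ⊤) {s : ℚ} (hs : r < s) : W s = ⊥ := by
  by_contra hne
  refine hne (eq_bot_iff.mpr fun v hv => ?_)
  have hinv : v ∈ subInvariants ρ (fil s) := htop s hs ▸ Submodule.mem_top
  exact (hW.2.2.2 s hne).2.1 (htr.trans_lt hs) v hv hinv

theorem eq_bot_of_ne (hW : IsSlopeDecomp fil t ρ W) (hρ : IsIsoclinic fil t ρ r) (htr : t < r)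
    {s : ℚ} (hs : s ≠ r) : W s = ⊥ := by
  rcases hs.lt_or_gt with hlt | hgt
  · by_contra hne
    have hle : W s ≤ subInvariants ρ (fil r) := fun v hv g hg =>
      (hW.2.2.2 s hne).2.2 r hlt g hg v hv
    exact hne (le_bot_iff.mp (hρ.2.1 htr ▸ hle))
  · exact hW.eq_bot_of_lt hρ.1 hρ.2.2 hgt

theorem dimtotOf_eq_of_isIsoclinic (hW : IsSlopeDecomp fil t ρ W) (hρ : IsIsoclinic fil t ρ r)
    (htr : t < r) : dimtotOf W = r * finrank Λ M := by
  have hWr : W r = ⊤ := by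
    rw [eq_top_iff, ← hW.2.2.1.submodule_iSup_eq_top]
    refine iSup_le fun s => ?_
    rcases eq_or_ne s r with rfl | hs
    · exact le_rfl
    · exact (hW.eq_bot_of_ne hρ htr hs).trans_le bot_le
  rw [dimtotOf, finsum_eq_single _ r fun s hs => by
    rw [hW.eq_bot_of_ne hρ htr hs, finrank_bot, Nat.cast_zero, mul_zero], hWr,
    finrank_top]

theorem dimtotOf_le [FiniteDimensional Λ M] (hW : IsSlopeDecomp fil t ρ W) (hr : 0 ≤ r)
    (hbd : ∀ s, r < s → W s = ⊥) : dimtotOf W ≤ r * finrank Λ M := by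
  classical
  set S := hW.2.1.toFinset
  have hsupp : (Function.support fun s => s * (finrank Λ (W s) : ℚ)) ⊆ S := fun s hs => by
    rw [Finset.mem_coe, Set.Finite.mem_toFinset]
    exact fun hbot => by simp [hbot] at hs
  rw [dimtotOf, finsum_eq_sum_of_support_subset _ hsupp]
  calc ∑ s ∈ S, s * (finrank Λ (W s) : ℚ)
      ≤ ∑ s ∈ S, r * (finrank Λ (W s) : ℚ) := by
        refine Finset.sum_le_sum fun s hs => mul_le_mul_of_nonneg_right ?_ (Nat.cast_nonneg _)
        by_contra! hlt
        exact hW.2.1.mem_toFinset.mp hs (hbd s hlt)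
    _ = r * (finrank Λ ↥(S.sup W) : ℚ) := by
        rw [← Finset.mul_sum, finrank_finset_sup_eq_sum hW.2.2.1.submodule_iSupIndep, Nat.cast_sum]
    _ ≤ r * finrank Λ M := by gcongr; exact Submodule.finrank_le _

end IsSlopeDecomp

end SlopeDecomposition

section Tensor

variable {Λ G M N : Type*} [Field Λ] [Group G]
  [AddCommGroup M] [Module Λ M] [AddCommGroup N] [Module Λ N]
  {fil : ℚ → Subgroup G} {t r r' : ℚ} {ρM : Representation Λ G M} {ρN : Representation Λ G N}

namespace IsIsoclinic

theorem tprod_subInvariants_eq_top (hM : IsIsoclinic fil t ρM r) (hN : IsIsoclinic fil t ρN r')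
    (hle : r' ≤ r) {s : ℚ} (hs : r < s) : subInvariants (ρM.tprod ρN) (fil s) = ⊤ :=
  subInvariants_tprod_eq_top (hM.2.2 s hs) (hN.2.2 s (hle.trans_lt hs))

theorem tprod (hM : IsIsoclinic fil t ρM r) (hN : IsIsoclinic fil t ρN r') (hlt : r' < r) :
    IsIsoclinic fil t (ρM.tprod ρN) r :=
  ⟨hM.1, fun htr => subInvariants_tprod_eq_bot (hM.2.1 htr) (hN.2.2 r hlt),
    fun _ hs => hM.tprod_subInvariants_eq_top hN hlt.le hs⟩

end IsIsoclinic

theorem tprod_slope_bound_and_dimtotOf [FiniteDimensional Λ M] [FiniteDimensional Λ N]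
    (ht : 0 ≤ t) :
    ∀ r r' : ℚ, IsIsoclinic fil t ρM r → IsIsoclinic fil t ρN r' → r' ≤ r →
      ((∀ s : ℚ, r < s → subInvariants (ρM.tprod ρN) (fil s) = ⊤) ∧
       (∀ W, IsSlopeDecomp fil t (ρM.tprod ρN) W →
          dimtotOf W ≤ (finrank Λ N : ℚ) * (finrank Λ M : ℚ) * r) ∧
       (r' < r →
          IsIsoclinic fil t (ρM.tprod ρN) r ∧
          ∀ W WM, IsSlopeDecomp fil t (ρM.tprod ρN) W → IsSlopeDecomp fil t ρM WM →
            dimtotOf W = (finrank Λ N : ℚ) * dimtotOf WM ∧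
            dimtotOf W = (finrank Λ N : ℚ) * (finrank Λ M : ℚ) * r)) := by
  intro r r' hM hN hle
  have hdim : (finrank Λ (M ⊗[Λ] N) : ℚ) = finrank Λ N * finrank Λ M := by
    rw [finrank_tensorProduct, Nat.cast_mul, mul_comm]
  have htop : ∀ s, r < s → subInvariants (ρM.tprod ρN) (fil s) = ⊤ :=
    fun _ => hM.tprod_subInvariants_eq_top hN hle
  refine ⟨htop, fun W hW => ?_, fun hlt => ⟨hM.tprod hN hlt, fun W WM hW hWM => ?_⟩⟩
  · calc dimtotOf W ≤ r * finrank Λ (M ⊗[Λ] N) :=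
          hW.dimtotOf_le (ht.trans hM.1) fun _ => hW.eq_bot_of_lt hM.1 htop
      _ = _ := by rw [hdim]; ring
  · have htr : t < r := hN.1.trans_lt hlt
    rw [hW.dimtotOf_eq_of_isIsoclinic (hM.tprod hN hlt) htr,
      hWM.dimtotOf_eq_of_isIsoclinic hM htr, hdim]
    constructor <;> ring

end Tensor

theorem tensor_isoclinic_dimtot_sw_general
    (Λ : Type*) [Field Λ]
    -- the absolute Galois group `G_K` of the henselian discrete valuation field `K`
    (G : Type*) [Group G]
    -- the Abbes–Saito ramification filtration `{G_K^r}` and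
    -- logarithmic ramification filtration `{G_{K,log}^r}` of `G_K`
    (fil logfil : ℚ → Subgroup G)
    -- `M` and `N`: finitely generated `Λ`-modules with continuous `G_K`-action
    (M N : Type*) [AddCommGroup M] [Module Λ M] [AddCommGroup N] [Module Λ N]
    [FiniteDimensional Λ M] [FiniteDimensional Λ N]
    (ρM : Representation Λ G M) (ρN : Representation Λ G N) :
    -- (i) the nonlogarithmic statement
    (∀ r r' : ℚ, IsIsoclinic fil 1 ρM r → IsIsoclinic fil 1 ρN r' → r' ≤ r →
      ((∀ s : ℚ, r < s → subInvariants (ρM.tprod ρN) (fil s) = ⊤) ∧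
       (∀ W, IsSlopeDecomp fil 1 (ρM.tprod ρN) W →
          dimtotOf W ≤ (Module.finrank Λ N : ℚ) * (Module.finrank Λ M : ℚ) * r) ∧
       (r' < r →
          IsIsoclinic fil 1 (ρM.tprod ρN) r ∧
          ∀ W WM, IsSlopeDecomp fil 1 (ρM.tprod ρN) W → IsSlopeDecomp fil 1 ρM WM →
            dimtotOf W = (Module.finrank Λ N : ℚ) * dimtotOf WM ∧
            dimtotOf W = (Module.finrank Λ N : ℚ) * (Module.finrank Λ M : ℚ) * r))) ∧
    -- (ii) the logarithmic statement
    (∀ r r' : ℚ, IsIsoclinic logfil 0 ρM r → IsIsoclinic logfil 0 ρN r' → r' ≤ r →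
      ((∀ s : ℚ, r < s → subInvariants (ρM.tprod ρN) (logfil s) = ⊤) ∧
       (∀ W, IsSlopeDecomp logfil 0 (ρM.tprod ρN) W →
          dimtotOf W ≤ (Module.finrank Λ N : ℚ) * (Module.finrank Λ M : ℚ) * r) ∧
       (r' < r →
          IsIsoclinic logfil 0 (ρM.tprod ρN) r ∧
          ∀ W WM, IsSlopeDecomp logfil 0 (ρM.tprod ρN) W → IsSlopeDecomp logfil 0 ρM WM →
            dimtotOf W = (Module.finrank Λ N : ℚ) * dimtotOf WM ∧
            dimtotOf W = (Module.finrank Λ N : ℚ) * (Module.finrank Λ M : ℚ) * r))) :=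
  ⟨tprod_slope_bound_and_dimtotOf zero_le_one, tprod_slope_bound_and_dimtotOf le_rfl⟩

theorem tensor_isoclinic_dimtot_sw
    (p ℓ : ℕ) [Fact p.Prime] [Fact ℓ.Prime] (hℓp : ℓ ≠ p)
    (Λ : Type*) [Field Λ] [Finite Λ] [CharP Λ ℓ]
    -- the absolute Galois group `G_K` of the henselian discrete valuation field `K`
    (G : Type*) [Group G]
    -- the Abbes–Saito ramification filtration `{G_K^r}` and
    -- logarithmic ramification filtration `{G_{K,log}^r}` of `G_K`
    (fil logfil : ℚ → Subgroup G)
    (hfil : Antitone fil) (hlogfil : Antitone logfil)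
    -- `M` and `N`: finitely generated `Λ`-modules with continuous `G_K`-action
    (M N : Type*) [AddCommGroup M] [Module Λ M] [AddCommGroup N] [Module Λ N]
    [FiniteDimensional Λ M] [FiniteDimensional Λ N]
    (ρM : Representation Λ G M) (ρN : Representation Λ G N) :
    -- (i) the nonlogarithmic statement
    (∀ r r' : ℚ, IsIsoclinic fil 1 ρM r → IsIsoclinic fil 1 ρN r' → r' ≤ r →
      ((∀ s : ℚ, r < s → subInvariants (ρM.tprod ρN) (fil s) = ⊤) ∧
       (∀ W, IsSlopeDecomp fil 1 (ρM.tprod ρN) W →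
          dimtotOf W ≤ (Module.finrank Λ N : ℚ) * (Module.finrank Λ M : ℚ) * r) ∧
       (r' < r →
          IsIsoclinic fil 1 (ρM.tprod ρN) r ∧
          ∀ W WM, IsSlopeDecomp fil 1 (ρM.tprod ρN) W → IsSlopeDecomp fil 1 ρM WM →
            dimtotOf W = (Module.finrank Λ N : ℚ) * dimtotOf WM ∧
            dimtotOf W = (Module.finrank Λ N : ℚ) * (Module.finrank Λ M : ℚ) * r))) ∧
    -- (ii) the logarithmic statement
    (∀ r r' : ℚ, IsIsoclinic logfil 0 ρM r → IsIsoclinic logfil 0 ρN r' → r' ≤ r →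
      ((∀ s : ℚ, r < s → subInvariants (ρM.tprod ρN) (logfil s) = ⊤) ∧
       (∀ W, IsSlopeDecomp logfil 0 (ρM.tprod ρN) W →
          dimtotOf W ≤ (Module.finrank Λ N : ℚ) * (Module.finrank Λ M : ℚ) * r) ∧
       (r' < r →
          IsIsoclinic logfil 0 (ρM.tprod ρN) r ∧
          ∀ W WM, IsSlopeDecomp logfil 0 (ρM.tprod ρN) W → IsSlopeDecomp logfil 0 ρM WM →
            dimtotOf W = (Module.finrank Λ N : ℚ) * dimtotOf WM ∧
            dimtotOf W = (Module.finrank Λ N : ℚ) * (Module.finrank Λ M : ℚ) * r))) :=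
  tensor_isoclinic_dimtot_sw_general Λ G fil logfil M N ρM ρN
end

section
/- Let K be a field of characteristic p ≥ 0, A an abelian variety over K, and g : X → A a finite Galois étale isogeny of abelian varieties over K of degree m (with g^{-1}(e_A) containing a rational point). Let n be a positive integer with gcd(n,m) = 1. Then for every n-torsion rational point a ∈ A[n](K), the fiber g^{-1}(a) is isomorphic as a K-scheme to the disjoint union of m copies of Spec K. -/
/-!
STATEMENT 14 (Lemma `lemma2`): Let `K` be a field of characteristic `p ≥ 0`, `A`
an abelian variety over `K`, and `g : X → A` a finite Galois étale isogeny of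
abelian varieties over `K` of degree `m` (with `g⁻¹(e_A)` containing a rational
point).  Let `n` be a positive integer with `gcd(n, m) = 1`.  Then for every
`a ∈ A[n](K)`, the fiber `g⁻¹(a)` is isomorphic as a `K`-scheme to the disjoint
union of `m` copies of `Spec K`.

Modelling: a finite étale covering is determined by its points over a separable
closure `K̄` together with the Galois action.  `Xbar = X(K̄)` and `Abar = A(K̄)`
are abelian groups with an action of the absolute Galois group `G = Gal(K̄/K)` by
group automorphisms, and `g` induces a surjective `G`-equivariant homomorphism
`gbar : Xbar → Abar` whose kernel has `m` elements and consists of rational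
(Galois-fixed) points — the latter being the content of Lemma `lemma1` for Galois
isogenies whose kernel contains a rational point.  A rational `n`-torsion point is
a Galois-fixed `a ∈ Abar` with `n • a = 0`.  The fiber `g⁻¹(a)` (an étale
`K`-scheme of degree `m`) is a disjoint union of `m` copies of `Spec K` exactly
when all of its `m` geometric points are rational, i.e. when it has exactly `m`
`K`-rational points.
-/

theorem fiber_of_coprime_torsion_point_splits
    (p : ℕ) (hp : p = 0 ∨ p.Prime)
    (K : Type*) [Field K] [CharP K p]
    -- the absolute Galois group of `K`
    (G : Type*) [Group G]
    -- the geometric points of `X` and `A`, with their Galois action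
    (Xbar Abar : Type*) [AddCommGroup Xbar] [AddCommGroup Abar]
    [DistribMulAction G Xbar] [DistribMulAction G Abar]
    -- the isogeny on geometric points: surjective, `G`-equivariant
    (gbar : Xbar →+ Abar) (hsurj : Function.Surjective gbar)
    (hequiv : ∀ (σ : G) (x : Xbar), gbar (σ • x) = σ • gbar x)
    -- `g` has degree `m`, and (being Galois with a rational point above `e_A`)
    -- its kernel is constant: all its geometric points are rational
    (m : ℕ) (hm : 0 < m) (hdeg : Nat.card gbar.ker = m)
    (hker_rat : ∀ y ∈ gbar.ker, ∀ σ : G, σ • y = y)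
    -- `n` is a positive integer coprime to `m`
    (n : ℕ) (hn : 0 < n) (hcop : Nat.Coprime n m)
    -- `a ∈ A[n](K)`: a rational `n`-torsion point
    (a : Abar) (ha_rat : ∀ σ : G, σ • a = a) (ha_tor : n • a = 0) :
    -- the fiber `g⁻¹(a)` splits: it has exactly `m` `K`-rational points
    Nat.card {x : Xbar // gbar x = a ∧ ∀ σ : G, σ • x = x} = m := by

  -- Step 1: the kernel is a finite group of order `m`.
  have hfin : Finite gbar.ker := Nat.finite_of_card_ne_zero (by omega)
  -- Step 2: every point of the fiber is rational.
  have key : ∀ x : Xbar, gbar x = a → ∀ σ : G, σ • x = x := by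
    intro x hx σ
    set c : Xbar := σ • x - x with hc
    have hcker : c ∈ gbar.ker := by
      simp only [AddMonoidHom.mem_ker, hc, map_sub, hequiv, hx, ha_rat, sub_self]
    -- `n • x` lies in the kernel, hence is Galois-fixed, so `n • c = 0`.
    have hnx : n • x ∈ gbar.ker := by
      simp [AddMonoidHom.mem_ker, map_nsmul, hx, ha_tor]
    have hnc : n • c = 0 := by
      have := hker_rat _ hnx σ
      have : σ • (n • x) = n • x := this
      rw [smul_comm σ n x] at this
      simp [hc, smul_sub, this]
    -- the kernel has exponent dividing `m`, so `m • c = 0`.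
    have hmc : m • c = 0 := by
      have : (Nat.card gbar.ker) • (⟨c, hcker⟩ : gbar.ker) = 0 := by
        have := Fintype.ofFinite gbar.ker
        rw [Nat.card_eq_fintype_card]
        exact card_nsmul_eq_zero
      rw [hdeg] at this
      have := congrArg (Subtype.val) this
      simpa using this
    -- coprimality forces `c = 0`.
    have hord : addOrderOf c ∣ Nat.gcd n m :=
      Nat.dvd_gcd (addOrderOf_dvd_of_nsmul_eq_zero hnc)
        (addOrderOf_dvd_of_nsmul_eq_zero hmc)
    rw [hcop] at hord
    have : c = 0 := by
      have h1 : addOrderOf c = 1 := Nat.eq_one_of_dvd_one hord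
      have := addOrderOf_nsmul_eq_zero c
      rwa [h1, one_nsmul] at this
    exact sub_eq_zero.mp this
  -- Step 3: pick a basepoint of the fiber and translate to the kernel.
  obtain ⟨x₀, hx₀⟩ := hsurj a
  have e : {x : Xbar // gbar x = a ∧ ∀ σ : G, σ • x = x} ≃ gbar.ker :=
    { toFun := fun x => ⟨x.1 - x₀, by
        simp [AddMonoidHom.mem_ker, x.2.1, hx₀]⟩
      invFun := fun k => ⟨k.1 + x₀, by
        constructor
        · have hk := k.2
          rw [AddMonoidHom.mem_ker] at hk
          simp [hk, hx₀]
        · intro σ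
          exact key _ (by
            have hk := k.2
            rw [AddMonoidHom.mem_ker] at hk
            simp [hk, hx₀]) σ⟩
      left_inv := fun x => by simp
      right_inv := fun k => by simp }
  rw [Nat.card_congr e, hdeg]
end

section
/- Let G be a group and let 0 → F → X → A → 0 be a short exact sequence of abelian groups equipped with G-actions by group automorphisms, with all maps G-equivariant. Assume that F is finite of cardinality m and that G acts trivially on F. Let n be a positive integer with gcd(n,m) = 1 and let a ∈ A be an element fixed by G with n·a = 0. Then there exists an element x ∈ X fixed by G whose image in A is a. -/
/-!
STATEMENT 18: Let `G` be a group and `0 → F → X → A → 0` a short exact sequence of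
abelian groups equipped with `G`-actions by group automorphisms, all maps being
`G`-equivariant.  Assume `F` is finite of cardinality `m` and that `G` acts trivially
on `F`.  Let `n` be a positive integer with `gcd(n,m) = 1` and let `a ∈ A` be an
element fixed by `G` with `n • a = 0`.  Then there is an element `x ∈ X` fixed by `G`
whose image in `A` is `a`.
-/

theorem exists_fixed_lift_of_coprime_torsion
    {G F X A : Type*} [Group G] [AddCommGroup F] [AddCommGroup X] [AddCommGroup A]
    [DistribMulAction G F] [DistribMulAction G X] [DistribMulAction G A]
    [Finite F]
    (f : F →+ X) (g : X →+ A)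
    (hf : Function.Injective f) (hg : Function.Surjective g)
    (hexact : ∀ x : X, g x = 0 ↔ x ∈ f.range)
    (hfequiv : ∀ (σ : G) (y : F), f (σ • y) = σ • f y)
    (hgequiv : ∀ (σ : G) (x : X), g (σ • x) = σ • g x)
    (htriv : ∀ (σ : G) (y : F), σ • y = y)
    {m n : ℕ} (hm : Nat.card F = m) (hn : 0 < n) (hcop : Nat.Coprime n m)
    (a : A) (ha : ∀ σ : G, σ • a = a) (hna : n • a = 0) :
    ∃ x : X, (∀ σ : G, σ • x = x) ∧ g x = a := by
  obtain ⟨x, hx⟩ := hg a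
  refine ⟨x, fun σ => ?_, hx⟩
  -- the difference d := σ • x - x lies in the image of f
  set d : X := σ • x - x with hd
  have hgd : g d = 0 := by
    simp [hd, hgequiv, hx, ha σ]
  obtain ⟨y, hy⟩ := (hexact d).mp hgd
  -- n • x lies in the image of f
  have hgnx : g (n • x) = 0 := by simp [hx, hna]
  obtain ⟨c, hc⟩ := (hexact (n • x)).mp hgnx
  -- n • d = 0 since σ fixes n • x
  have hnd : n • d = 0 := by
    have : σ • (n • x) = n • x := by
      rw [← hc, ← hfequiv, htriv]
    have h2 : n • (σ • x) = n • x := by rw [smul_comm, this]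
    simp [hd, smul_sub, h2]
  -- m • d = 0 since d = f y and m • y = 0
  have hmd : m • d = 0 := by
    have hmy : m • y = 0 := by rw [← hm]; exact card_nsmul_eq_zero'
    rw [← hy, ← map_nsmul, hmy, map_zero]
  -- Bezout
  obtain ⟨u, v, huv⟩ : ∃ u v : ℤ, u * n + v * m = 1 := by
    refine ⟨Nat.gcdA n m, Nat.gcdB n m, ?_⟩
    have := Nat.gcd_eq_gcd_ab n m
    rw [hcop] at this
    push_cast at this
    linarith [this]
  have : d = 0 := by
    calc d = (1 : ℤ) • d := (one_smul ℤ d).symm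
    _ = (u * n + v * m) • d := by rw [huv]
    _ = u • ((n : ℤ) • d) + v • ((m : ℤ) • d) := by
        rw [add_smul, mul_smul, mul_smul]
    _ = 0 := by
        rw [natCast_zsmul, natCast_zsmul, hnd, hmd, smul_zero, smul_zero, add_zero]
  rw [hd] at this
  exact sub_eq_zero.mp this
end
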